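/- arXiv:2406.03370 — 2 statements merged into one kernel-verified Lean document; each statement's English description precedes it below -/
import Mathlib

section
/- Let Γ be a (possibly noncommutative) principal ideal domain which is not a division ring, and suppose its center Z is again a principal ideal domain. Call two atoms p, q of Γ similar if Γ/Γp ≅ Γ/Γq as left Γ-modules (this is an equivalence relation on the set of atoms). Then the cardinality of the set of maximal ideals of Z is at most the cardinality of the set of similarity classes of atoms of Γ; i.e., there is an injective map from the set of maximal ideals of Z into the set of similarity classes of atoms of Γ. -/
open scoped TensorProduct

universe u

/-- The length of a module, computed as the Krull dimension (longest chain) of its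
lattice of submodules. -/
noncomputable def moduleLength (R M : Type*) [Ring R] [AddCommGroup M] [Module R M] : ℕ∞ :=
  (Order.krullDim (Submodule R M)).unbotD 0

/-- The endolength of a module `M`: its length as a module over its endomorphism ring
`Module.End R M`, which acts on `M` by evaluation. -/
noncomputable def endol (R M : Type*) [Ring R] [AddCommGroup M] [Module R M] : ℕ∞ :=
  moduleLength (Module.End R M) M

/-- A module is indecomposable if it is nonzero and is not the (internal) direct sum of
two nonzero submodules. -/
def IsIndecomposableModule (R : Type*) (M : Type*) [Ring R] [AddCommGroup M] [Module R M] :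
    Prop :=
  Nontrivial M ∧ ∀ N₁ N₂ : Submodule R M, IsCompl N₁ N₂ → N₁ = ⊥ ∨ N₂ = ⊥

/-- A (possibly noncommutative) principal ideal domain: a nontrivial ring with no zero
divisors in which every left ideal and every right ideal is principal. -/
def IsPID (Γ : Type u) [Ring Γ] : Prop :=
  Nontrivial Γ ∧ (∀ a b : Γ, a * b = 0 → a = 0 ∨ b = 0) ∧
    (∀ I : Submodule Γ Γ, I.IsPrincipal) ∧
    (∀ I : Submodule Γᵐᵒᵖ Γ, I.IsPrincipal)

/-- A bounded principal ideal domain: a PID in which every nonzero left ideal and every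
nonzero right ideal contains a nonzero two-sided ideal. -/
def IsBoundedPID (Γ : Type u) [Ring Γ] : Prop :=
  IsPID Γ ∧
    (∀ I : Submodule Γ Γ, I ≠ ⊥ →
      ∃ J : Submodule Γ Γ, J ≠ ⊥ ∧ (∀ x ∈ J, ∀ r : Γ, x * r ∈ J) ∧ J ≤ I) ∧
    (∀ I : Submodule Γᵐᵒᵖ Γ, I ≠ ⊥ →
      ∃ J : Submodule Γᵐᵒᵖ Γ, J ≠ ⊥ ∧ (∀ x ∈ J, ∀ r : Γ, r * x ∈ J) ∧ J ≤ I)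


-- auxiliary: right inverse in a domain implies unit
lemma aux_isUnit_of_mul_eq_one' {Γ : Type u} [Ring Γ] [NoZeroDivisors Γ]
    (a b : Γ) (h : b * a = 1) (ha : a ≠ 0) : IsUnit a := by
  have h2 : (a * b - 1) * a = 0 := by
    rw [sub_mul, one_mul, mul_assoc, h, mul_one, sub_self]
  rcases mul_eq_zero.mp h2 with h3 | h3
  · exact ⟨⟨a, b, sub_eq_zero.mp h3, h⟩, rfl⟩
  · exact absurd h3 ha

-- every nonzero nonunit has an irreducible right factor
lemma aux_atom_factor {Γ : Type u} [Ring Γ] (hΓ : IsPID Γ) :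
    ∀ x : Γ, x ≠ 0 → ¬ IsUnit x → ∃ p c : Γ, Irreducible p ∧ x = c * p := by
  obtain ⟨hnt, hnzd, hleft, _⟩ := hΓ
  haveI : Nontrivial Γ := hnt
  haveI : NoZeroDivisors Γ := ⟨fun {a b} h => hnzd a b h⟩
  haveI hnoeth : IsNoetherian Γ Γ := isNoetherian_def.mpr fun s => by
    obtain ⟨g, hg⟩ := hleft s
    exact ⟨{g}, by simpa using hg.symm⟩
  have hwf : WellFounded ((· > ·) : Submodule Γ Γ → Submodule Γ Γ → Prop) :=
    (isNoetherian_iff'.mp hnoeth).wf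
  have key : ∀ I : Submodule Γ Γ, ∀ x : Γ, Ideal.span {x} = I → x ≠ 0 → ¬ IsUnit x →
      ∃ p c : Γ, Irreducible p ∧ x = c * p := by
    intro I
    induction I using WellFounded.induction hwf with
    | _ I ih =>
      intro x hxI hx0 hxu
      by_cases hirr : Irreducible x
      · exact ⟨x, 1, hirr, (one_mul x).symm⟩
      · rw [irreducible_iff] at hirr
        push_neg at hirr
        obtain ⟨a, b, hab, ha, hb⟩ := hirr hxu
        have hb0 : b ≠ 0 := fun h => hx0 (by rw [hab, h, mul_zero])
        have ha0 : a ≠ 0 := fun h => hx0 (by rw [hab, h, zero_mul])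
        have hlt : I < Ideal.span {b} := by
          rw [← hxI]
          have hle : Ideal.span ({x} : Set Γ) ≤ Ideal.span {b} := by
            apply Submodule.span_le.mpr
            intro y hy
            simp only [Set.mem_singleton_iff] at hy
            subst hy
            rw [hab]
            exact Submodule.mem_span_singleton.mpr ⟨a, rfl⟩
          refine lt_of_le_of_ne hle (fun heq => ?_)
          have : b ∈ Ideal.span ({x} : Set Γ) := by
            rw [heq]; exact Submodule.mem_span_singleton_self b
          obtain ⟨d, hd⟩ := Submodule.mem_span_singleton.mp this
          rw [smul_eq_mul, hab, ← mul_assoc] at hd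
          have h1 : (d * a - 1) * b = 0 := by rw [sub_mul, one_mul, hd, sub_self]
          rcases mul_eq_zero.mp h1 with h2 | h2
          · exact ha (aux_isUnit_of_mul_eq_one' a d (sub_eq_zero.mp h2) ha0)
          · exact hb0 h2
        obtain ⟨p, c, hp, hc⟩ := ih (Ideal.span {b}) hlt b rfl hb0 hb
        exact ⟨p, a * c, hp, by rw [hab, hc, mul_assoc]⟩
  exact fun x => key (Ideal.span {x}) x rfl

-- a nonunit's span does not contain 1
lemma aux_one_not_mem {Γ : Type u} [Ring Γ] [NoZeroDivisors Γ] {p : Γ}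
    (hp : ¬ IsUnit p) (hp0 : p ≠ 0) : (1 : Γ) ∉ (Ideal.span {p} : Ideal Γ) := by
  intro h
  obtain ⟨d, hd⟩ := Submodule.mem_span_singleton.mp h
  rw [smul_eq_mul] at hd
  exact hp (aux_isUnit_of_mul_eq_one' p d hd hp0)

theorem stmt_8_aux {Γ : Type u} [Ring Γ] (hΓ : IsPID Γ)
    (hnd : ∃ x : Γ, x ≠ 0 ∧ ¬ IsUnit x)
    (hZ : IsDomain (Subring.center Γ) ∧ IsPrincipalIdealRing (Subring.center Γ)) :
    ∃ f : {I : Ideal (Subring.center Γ) // I.IsMaximal} → Γ,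
      (∀ I, Irreducible (f I)) ∧
      ∀ I J, Nonempty ((Γ ⧸ (Ideal.span {f I} : Ideal Γ)) ≃ₗ[Γ]
        (Γ ⧸ (Ideal.span {f J} : Ideal Γ))) → I = J := by
  classical
  set Z := Subring.center Γ with hZdef
  haveI : Nontrivial Γ := hΓ.1
  haveI : NoZeroDivisors Γ := ⟨fun {a b} h => hΓ.2.1 a b h⟩
  haveI hZd : IsDomain Z := hZ.1
  haveI hZp : IsPrincipalIdealRing Z := hZ.2
  obtain ⟨x0, hx00, hx0u⟩ := hnd
  obtain ⟨p₀, c₀, hp₀, -⟩ := aux_atom_factor hΓ x0 hx00 hx0u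
  by_cases hf : IsField Z
  · refine ⟨fun _ => p₀, fun _ => hp₀, ?_⟩
    intro I J _
    letI := hf.toField
    have hbot : ∀ K : {I : Ideal Z // I.IsMaximal}, K.1 = ⊥ := by
      intro K
      rcases K.1.eq_bot_or_top with h | h
      · exact h
      · exact absurd h K.2.ne_top
    exact Subtype.ext ((hbot I).trans (hbot J).symm)
  · -- every maximal ideal is nonzero
    have hne : ∀ K : {I : Ideal Z // I.IsMaximal}, K.1 ≠ ⊥ := by
      intro K hK
      apply hf
      refine ⟨exists_pair_ne Z, mul_comm, ?_⟩
      intro a ha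
      have hlt : (⊥ : Ideal Z) < Ideal.span {a} := by
        refine lt_of_le_of_ne bot_le ?_
        intro h
        exact ha (by simpa using (Ideal.span_singleton_eq_bot.mp h.symm))
      have hsp : Ideal.span ({a} : Set Z) = ⊤ := by
        have hm := K.2
        rw [hK] at hm
        exact hm.1.2 _ hlt
      obtain ⟨b, hb⟩ := Ideal.mem_span_singleton'.mp (hsp ▸ Submodule.mem_top)
      exact ⟨b, by rw [mul_comm] at hb; exact hb⟩
    have hfun : ∀ K : {I : Ideal Z // I.IsMaximal},
        ∃ p : Γ, Irreducible p ∧ ∃ π : Z, Ideal.span {π} = K.1 ∧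
          (π : Γ) ∈ (Ideal.span {p} : Ideal Γ) := by
      intro K
      haveI := hZp.principal K.1
      set π := Submodule.IsPrincipal.generator K.1 with hπ
      have hspan : Ideal.span {π} = K.1 := Submodule.IsPrincipal.span_singleton_generator K.1
      have hπ0 : π ≠ 0 := by
        intro h
        apply hne K
        rw [← hspan, h, Ideal.span_singleton_eq_bot.mpr rfl]
      have hπΓ0 : (π : Γ) ≠ 0 := by
        intro h
        exact hπ0 (Subtype.ext h)
      have hcen : ∀ g : Γ, g * (π : Γ) = (π : Γ) * g := fun g =>
        (Subring.mem_center_iff.mp π.2 g)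
      have hπu : ¬ IsUnit (π : Γ) := by
        intro hu
        obtain ⟨v, hv⟩ := hu
        set w : Γ := ((v⁻¹ : Γˣ) : Γ) with hwdef
        have hwπ : w * (π : Γ) = 1 := by rw [hwdef, ← hv]; exact v.inv_mul
        have hπw : (π : Γ) * w = 1 := by rw [hwdef, ← hv]; exact v.mul_inv
        have hwc : ∀ g : Γ, w * g = g * w := by
          intro g
          calc w * g = w * g * ((π : Γ) * w) := by rw [hπw, mul_one]
            _ = w * ((π : Γ) * g) * w := by
                  rw [mul_assoc w g _, ← hcen g]
                  simp only [mul_assoc]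
            _ = (w * (π : Γ)) * (g * w) := by simp only [mul_assoc]
            _ = g * w := by rw [hwπ, one_mul]
        have hvinv : w ∈ Subring.center Γ :=
          Subring.mem_center_iff.mpr fun g => (hwc g).symm
        -- π is a unit in Z
        have : IsUnit π := by
          refine ⟨⟨π, ⟨w, hvinv⟩, ?_, ?_⟩, rfl⟩
          · exact Subtype.ext hπw
          · exact Subtype.ext hwπ
        have : Ideal.span ({π} : Set Z) = ⊤ := Ideal.span_singleton_eq_top.mpr this
        rw [hspan] at this
        exact K.2.ne_top this
      obtain ⟨p, c, hp, hc⟩ := aux_atom_factor hΓ (π : Γ) hπΓ0 hπu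
      refine ⟨p, hp, π, hspan, ?_⟩
      rw [hc]
      exact Submodule.mem_span_singleton.mpr ⟨c, rfl⟩
    choose f hfirr hfπ using hfun
    refine ⟨f, hfirr, ?_⟩
    intro I J ⟨e⟩
    -- annihilator characterization
    have hann : ∀ (p : Γ), (∀ g : Γ, ∀ z : Γ, g * z = z * g → z ∈ (Ideal.span {p} : Ideal Γ) →
        True) → True := fun _ _ => trivial
    have hchar : ∀ (p : Γ), ∀ z : Z,
        ((z : Γ) ∈ (Ideal.span {p} : Ideal Γ) ↔
          ∀ m : Γ ⧸ (Ideal.span {p} : Ideal Γ), (z : Γ) • m = 0) := by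
      intro p z
      constructor
      · intro hz m
        obtain ⟨x, rfl⟩ := Submodule.Quotient.mk_surjective _ m
        rw [← Submodule.Quotient.mk_smul, smul_eq_mul]
        rw [Submodule.Quotient.mk_eq_zero]
        have : (z : Γ) * x = x * (z : Γ) := (Subring.mem_center_iff.mp z.2 x).symm
        rw [this]
        obtain ⟨d, hd⟩ := Submodule.mem_span_singleton.mp hz
        rw [smul_eq_mul] at hd
        rw [← hd, ← mul_assoc]
        exact Submodule.mem_span_singleton.mpr ⟨x * d, rfl⟩
      · intro hm
        have := hm (Submodule.Quotient.mk 1)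
        rw [← Submodule.Quotient.mk_smul, smul_eq_mul, mul_one,
          Submodule.Quotient.mk_eq_zero] at this
        exact this
    -- transfer via the isomorphism
    have htrans : ∀ z : Z, (z : Γ) ∈ (Ideal.span {f I} : Ideal Γ) ↔
        (z : Γ) ∈ (Ideal.span {f J} : Ideal Γ) := by
      intro z
      rw [hchar (f I) z, hchar (f J) z]
      constructor
      · intro h m
        have := congrArg e (h (e.symm m))
        rw [map_smul, map_zero, LinearEquiv.apply_symm_apply] at this
        exact this
      · intro h m
        have := congrArg e.symm (h (e m))
        rw [map_smul, map_zero, LinearEquiv.symm_apply_apply] at this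
        exact this
    -- the comap ideals
    have hIeq : ∀ K : {I : Ideal Z // I.IsMaximal},
        K.1 = Ideal.comap (Subring.subtype Z) (Ideal.span {f K} : Ideal Γ) := by
      intro K
      obtain ⟨π, hspan, hπmem⟩ := hfπ K
      have hle : K.1 ≤ Ideal.comap (Subring.subtype Z) (Ideal.span {f K} : Ideal Γ) := by
        intro z hz
        rw [← hspan] at hz
        obtain ⟨w, hw⟩ := Ideal.mem_span_singleton'.mp hz
        rw [Ideal.mem_comap]
        show ((z : Z) : Γ) ∈ _
        rw [← hw]
        push_cast
        have hcen : (w : Γ) * (π : Γ) = (π : Γ) * (w : Γ) :=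
          Subring.mem_center_iff.mp π.2 (w : Γ)
        obtain ⟨d, hd⟩ := Submodule.mem_span_singleton.mp hπmem
        rw [smul_eq_mul] at hd
        rw [← hd, ← mul_assoc]
        exact Submodule.mem_span_singleton.mpr ⟨(w : Γ) * d, rfl⟩
      have hproper : Ideal.comap (Subring.subtype Z) (Ideal.span {f K} : Ideal Γ) ≠ ⊤ := by
        intro h
        have h1 : (1 : Z) ∈ Ideal.comap (Subring.subtype Z) (Ideal.span {f K} : Ideal Γ) := by
          rw [h]; trivial
        rw [Ideal.mem_comap] at h1
        exact aux_one_not_mem (hfirr K).not_isUnit (hfirr K).ne_zero (by simpa using h1)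
      exact K.2.eq_of_le hproper hle
    have hSeq : Ideal.comap (Subring.subtype Z) (Ideal.span {f I} : Ideal Γ) =
        Ideal.comap (Subring.subtype Z) (Ideal.span {f J} : Ideal Γ) := by
      ext z
      rw [Ideal.mem_comap, Ideal.mem_comap]
      exact htrans z
    exact Subtype.ext ((hIeq I).trans (hSeq.trans (hIeq J).symm))

/-- Let `Γ` be a (possibly noncommutative) PID which is not a division
ring, whose center `Z` is again a principal ideal domain. Then there is an injective map
from the set of maximal ideals of `Z` into the set of similarity classes of atoms of `Γ`
(two atoms `p, q` being similar when `Γ/Γp ≅ Γ/Γq`). -/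
theorem stmt_8 {Γ : Type u} [Ring Γ] (hΓ : IsPID Γ)
    (hnd : ∃ x : Γ, x ≠ 0 ∧ ¬ IsUnit x)
    (hZ : IsDomain (Subring.center Γ) ∧ IsPrincipalIdealRing (Subring.center Γ)) :
    ∃ f : {I : Ideal (Subring.center Γ) // I.IsMaximal} → Γ,
      (∀ I, Irreducible (f I)) ∧
      ∀ I J, Nonempty ((Γ ⧸ (Ideal.span {f I} : Ideal Γ)) ≃ₗ[Γ]
        (Γ ⧸ (Ideal.span {f J} : Ideal Γ))) → I = J := by
  exact stmt_8_aux hΓ hnd hZ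
end

section
/- Let Γ be a ring and b ∈ Γ such that Γb = bΓ is a proper two-sided ideal that is maximal among proper two-sided ideals of Γ. Let p ∈ Γ with Γp ≠ Γ and b ∈ Γp. Then the annihilator of the nonzero left Γ-module Γ/Γp equals Γb. Consequently, if b' ∈ Γ is another element with Γb' = b'Γ a maximal two-sided ideal, Γb' ≠ Γb, and p' ∈ Γ with Γp' ≠ Γ and b' ∈ Γp', then Γ/Γp and Γ/Γp' are not isomorphic as Γ-modules. -/
universe u

private lemma stmt10_aux {Γ : Type u} [Ring Γ] (b : Γ)
    (hbil : (Set.range fun γ : Γ => γ * b) = (Set.range fun γ : Γ => b * γ))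
    (hbmax : ∀ J : Ideal Γ, (∀ x ∈ J, ∀ r : Γ, x * r ∈ J) →
      (Ideal.span {b} : Ideal Γ) < J → J = ⊤)
    (p : Γ) (hpne : (Ideal.span {p} : Ideal Γ) ≠ ⊤)
    (hbp : b ∈ (Ideal.span {p} : Ideal Γ)) :
    ∀ γ : Γ, (∀ x : Γ ⧸ (Ideal.span {p} : Ideal Γ), γ • x = 0) ↔
      γ ∈ (Ideal.span {b} : Ideal Γ) := by
  set I : Ideal Γ := Ideal.span {p} with hI
  have key : ∀ γ : Γ, (∀ x : Γ ⧸ I, γ • x = 0) ↔ ∀ r : Γ, γ * r ∈ I := by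
    intro γ
    constructor
    · intro h r
      have := h (Submodule.Quotient.mk r)
      rwa [← Submodule.Quotient.mk_smul, Submodule.Quotient.mk_eq_zero,
        smul_eq_mul] at this
    · intro h x
      obtain ⟨r, rfl⟩ := Submodule.Quotient.mk_surjective _ x
      rw [← Submodule.Quotient.mk_smul, Submodule.Quotient.mk_eq_zero, smul_eq_mul]
      exact h r
  set J : Ideal Γ :=
    { carrier := {γ : Γ | ∀ r : Γ, γ * r ∈ I}
      add_mem' := fun {x y} hx hy r => by
        simpa [add_mul] using I.add_mem (hx r) (hy r)
      zero_mem' := fun r => by simp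
      smul_mem' := fun c γ hγ r => by
        simpa [smul_eq_mul, mul_assoc] using Ideal.mul_mem_left I c (hγ r) } with hJdef
  have hJmem : ∀ γ : Γ, γ ∈ J ↔ ∀ r : Γ, γ * r ∈ I := fun γ => Iff.rfl
  have hJr : ∀ x ∈ J, ∀ r : Γ, x * r ∈ J := by
    intro x hx r s
    simpa [mul_assoc] using hx (r * s)
  have hbJ : (Ideal.span {b} : Ideal Γ) ≤ J := by
    rw [Ideal.span_le, Set.singleton_subset_iff]
    intro r
    have : b * r ∈ Set.range fun γ : Γ => b * γ := ⟨r, rfl⟩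
    rw [← hbil] at this
    obtain ⟨c, hc⟩ := this
    rw [← hc]
    exact Ideal.mul_mem_left I c hbp
  have hJne : J ≠ ⊤ := by
    intro h
    apply hpne
    rw [Ideal.eq_top_iff_one]
    have : (1 : Γ) ∈ J := h ▸ Submodule.mem_top
    simpa using this 1
  have hJeq : J = Ideal.span {b} := by
    by_contra hne
    exact hJne (hbmax J hJr (lt_of_le_of_ne hbJ (Ne.symm hne)))
  intro γ
  rw [key γ, ← hJmem γ, hJeq]

/-- Let `Γ` be a ring and `b ∈ Γ` with `Γb = bΓ` a proper two-sided
ideal which is maximal among proper two-sided ideals. Let `p ∈ Γ` with `Γp ≠ Γ` and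
`b ∈ Γp`. Then the annihilator of `Γ/Γp` equals `Γb`; consequently, for another such
pair `(b', p')` with `Γb' ≠ Γb`, the modules `Γ/Γp` and `Γ/Γp'` are not isomorphic. -/
theorem stmt_10 {Γ : Type u} [Ring Γ] (b : Γ)
    (hbil : (Set.range fun γ : Γ => γ * b) = (Set.range fun γ : Γ => b * γ))
    (hbne : (Ideal.span {b} : Ideal Γ) ≠ ⊤)
    (hbmax : ∀ J : Ideal Γ, (∀ x ∈ J, ∀ r : Γ, x * r ∈ J) →
      (Ideal.span {b} : Ideal Γ) < J → J = ⊤)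
    (p : Γ) (hpne : (Ideal.span {p} : Ideal Γ) ≠ ⊤)
    (hbp : b ∈ (Ideal.span {p} : Ideal Γ)) :
    (∀ γ : Γ, (∀ x : Γ ⧸ (Ideal.span {p} : Ideal Γ), γ • x = 0) ↔
      γ ∈ (Ideal.span {b} : Ideal Γ)) ∧
    ∀ b' : Γ,
      (Set.range fun γ : Γ => γ * b') = (Set.range fun γ : Γ => b' * γ) →
      (Ideal.span {b'} : Ideal Γ) ≠ ⊤ →
      (∀ J : Ideal Γ, (∀ x ∈ J, ∀ r : Γ, x * r ∈ J) →
        (Ideal.span {b'} : Ideal Γ) < J → J = ⊤) →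
      (Ideal.span {b'} : Ideal Γ) ≠ (Ideal.span {b} : Ideal Γ) →
      ∀ p' : Γ, (Ideal.span {p'} : Ideal Γ) ≠ ⊤ →
        b' ∈ (Ideal.span {p'} : Ideal Γ) →
        IsEmpty ((Γ ⧸ (Ideal.span {p} : Ideal Γ)) ≃ₗ[Γ]
          (Γ ⧸ (Ideal.span {p'} : Ideal Γ))) := by
  have h1 := stmt10_aux b hbil hbmax p hpne hbp
  refine ⟨h1, ?_⟩
  intro b' hbil' hbne' hbmax' hne p' hpne' hbp'
  have h2 := stmt10_aux b' hbil' hbmax' p' hpne' hbp'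
  constructor
  intro e
  apply hne
  ext γ
  rw [← h2 γ, ← h1 γ]
  constructor
  · intro h x
    have := h (e x)
    have h3 : γ • (e.symm (e x)) = e.symm 0 := by rw [← e.symm.map_smul, this]
    simpa using h3
  · intro h x
    have := h (e.symm x)
    have h3 : γ • (e (e.symm x)) = e 0 := by rw [← e.map_smul, this]
    simpa using h3
end
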